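/- Let (I,J) be an instance of Variable-Sized Bin Covering with unit supply such that NFD's solution has exactly one well-covered bin and at least one non-empty bin that is not well-covered, and let i* be the head of the instance. If NFD assigns at least three items to bin 1 and some optimal solution assigns at least one of these items to a bin with index at least i*, then OPT(I,J) ≤ (9/4)·NFD(I,J). -/

import Mathlib

open scoped Classical

noncomputable section

namespace BinCov

/-- Profit of a solution `S` on the bin set `B`: a bin `i ∈ B` earns profit `p i`
if the total size of the items assigned to it is at least its demand `d i`. -/
def profit (d p s : ℕ → ℝ) (B : Finset ℕ) (S : ℕ → Finset ℕ) : ℝ :=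
  ∑ i ∈ B, if d i ≤ ∑ j ∈ S i, s j then p i else 0

/-- A solution assigns pairwise disjoint subsets of the item set `T` to the bins. -/
def IsSolution (T : Finset ℕ) (S : ℕ → Finset ℕ) : Prop :=
  (∀ i, S i ⊆ T) ∧ Pairwise fun i i' => Disjoint (S i) (S i')

/-- Optimal profit over all solutions on bins `B` and items `T`. -/
def OPT (d p s : ℕ → ℝ) (B T : Finset ℕ) : ℝ :=
  sSup (profit d p s B '' {S | IsSolution T S})

/-- Take a minimal prefix of `items` whose total size reaches `dem`;
returns this prefix together with the remaining items. -/
def takeFill (s : ℕ → ℝ) : ℝ → List ℕ → List ℕ × List ℕ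
  | _, [] => ([], [])
  | dem, j :: rest =>
    if dem ≤ s j then ([j], rest)
    else
      let q := takeFill s (dem - s j) rest
      (j :: q.1, q.2)

/-- Next Fit Decreasing on the list `bins` of bins and the list `items` of still
unassigned items (both by index, i.e. in non-increasing order of demand resp. size):
if the unassigned items cannot cover the current bin, it is left empty; otherwise a
minimal prefix of the unassigned items is assigned to it.  Returns, for each bin,
the set of items assigned to it. -/
def nfdAux (d s : ℕ → ℝ) : List ℕ → List ℕ → ℕ → Finset ℕ
  | [], _, _ => ∅
  | i :: bins, items, b =>
    if d i ≤ (items.map s).sum then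
      let q := takeFill s (d i) items
      if b = i then q.1.toFinset else nfdAux d s bins q.2 b
    else
      if b = i then ∅ else nfdAux d s bins items b

/-- The solution produced by NFD on bin set `B` and item set `T` (bins and items are
processed in increasing order of index; demands and sizes are non-increasing in the index). -/
def nfdSol (d s : ℕ → ℝ) (B T : Finset ℕ) : ℕ → Finset ℕ :=
  nfdAux d s (B.sort (· ≤ ·)) (T.sort (· ≤ ·))

/-- The total size `u i` that NFD assigns to bin `i`. -/
def nfdU (d s : ℕ → ℝ) (B T : Finset ℕ) (i : ℕ) : ℝ :=
  ∑ j ∈ nfdSol d s B T i, s j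

/-- The profit NFD earns (Variable-Sized Bin Covering: the profit of a bin is its demand). -/
def NFD (d s : ℕ → ℝ) (B T : Finset ℕ) : ℝ :=
  profit d d s B (nfdSol d s B T)

/-- A bin `istar` with `u istar > 0` in NFD's solution (bins `0,…,m-1`, items `T`) is
well-covered if for the smallest index `i' > istar` with `u i' = 0` (which must exist)
one has `u i ≤ 2 * d i` for all bins `i ≤ i'`. -/
def WellCovered (d s : ℕ → ℝ) (m : ℕ) (T : Finset ℕ) (istar : ℕ) : Prop :=
  istar < m ∧ 0 < nfdU d s (Finset.range m) T istar ∧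
    ∃ i', istar < i' ∧ i' < m ∧ nfdU d s (Finset.range m) T i' = 0 ∧
      (∀ i, istar < i → i < i' → nfdU d s (Finset.range m) T i ≠ 0) ∧
      ∀ i ≤ i', nfdU d s (Finset.range m) T i ≤ 2 * d i

/-- `istar` is the head of the instance: letting `i0` be the smallest index of a non-empty
bin of NFD's solution that is not well-covered, and `i1 ≥ i0` the smallest index with
`u (i1+1) = 0`, the head is the largest index `istar ≤ i1` with `u istar > 2 * d istar`. -/
def IsHead (d s : ℕ → ℝ) (m : ℕ) (T : Finset ℕ) (istar : ℕ) : Prop :=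
  ∃ i0 i1,
    i0 < m ∧ 0 < nfdU d s (Finset.range m) T i0 ∧ ¬ WellCovered d s m T i0 ∧
    (∀ i < i0, 0 < nfdU d s (Finset.range m) T i → WellCovered d s m T i) ∧
    i0 ≤ i1 ∧ nfdU d s (Finset.range m) T (i1 + 1) = 0 ∧
    (∀ i, i0 ≤ i → i < i1 → nfdU d s (Finset.range m) T (i + 1) ≠ 0) ∧
    istar ≤ i1 ∧ 2 * d istar < nfdU d s (Finset.range m) T istar ∧
    (∀ i ≤ i1, 2 * d i < nfdU d s (Finset.range m) T i → i ≤ istar)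

/-- The inner loop of `ALG*` on one bin: `dcap` is the bin's demand (items are admissible iff
their size is at most `dcap`), `space` is the part of the demand not yet covered, and `rem j`
is the still unassigned part of item `j` (items `0,…,n-1`, sizes non-increasing in the index).
While the bin is not covered and some admissible item is not fully assigned, the largest such
item (i.e. the one of smallest index) is taken and its remaining part is assigned to the bin,
splitting it so that the bin is exactly covered if it would overflow.
Returns the updated remainders together with the total amount assigned to the bin. -/
def fillBin (s : ℕ → ℝ) (n : ℕ) (dcap : ℝ) : ℕ → ℝ → (ℕ → ℝ) → (ℕ → ℝ) × ℝ
  | 0, _, rem => (rem, 0)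
  | fuel + 1, space, rem =>
    if h : ∃ j, j < n ∧ s j ≤ dcap ∧ 0 < rem j then
      let j := Nat.find h
      if rem j ≤ space then
        let q := fillBin s n dcap fuel (space - rem j) (Function.update rem j 0)
        (q.1, q.2 + rem j)
      else
        (Function.update rem j (rem j - space), space)
    else (rem, 0)

/-- The outer loop of `ALG*`: the bins are processed in the given order (non-increasing
efficiency); returns the total amount assigned to each bin. -/
def algStarFillAux (d s : ℕ → ℝ) (n : ℕ) : List ℕ → (ℕ → ℝ) → ℕ → ℝ
  | [], _, _ => 0
  | i :: bins, rem, b =>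
    let q := fillBin s n (d i) n (d i) rem
    if b = i then q.2 else algStarFillAux d s n bins q.1 b

/-- The total amount `ALG*` assigns to each bin, on the instance with bins `0,…,m-1`
(in non-increasing order of efficiency) and items `0,…,n-1` (in non-increasing order of size). -/
def algStarFill (m n : ℕ) (d s : ℕ → ℝ) : ℕ → ℝ :=
  algStarFillAux d s n (List.range m) fun j => if j < n then s j else 0

/-- The modified profit `p*` of the solution produced by `ALG*`. -/
def algStarPStar (m n : ℕ) (d p s : ℕ → ℝ) : ℝ :=
  ∑ i ∈ Finset.range m, p i * min (algStarFill m n d s i / d i) 1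

/-- The optimum of the linear program for the modified Bin Covering problem. -/
def LPOpt (m n : ℕ) (d p s : ℕ → ℝ) : ℝ :=
  sSup {v : ℝ | ∃ y : ℕ → ℝ, ∃ x : ℕ → ℕ → ℝ,
    (∀ i < m, y i ≤ (∑ j ∈ Finset.range n, x j i) / d i) ∧
    (∀ j < n, ∑ i ∈ Finset.range m, x j i ≤ s j) ∧
    (∀ i, 0 ≤ y i ∧ y i ≤ 1) ∧
    (∀ j i, 0 ≤ x j i) ∧
    (∀ j < n, ∀ i < m, d i < s j → x j i = 0) ∧
    v = ∑ i ∈ Finset.range m, p i * y i}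

/-- A solution of the modified Bin Covering problem, assigning item parts from the
finite set `P` (part `q ∈ P` belongs to item `itm q`) to the bins `0,…,m-1`;
a part may only be assigned to a bin to which its item is admissible. -/
def IsPartSolution (m : ℕ) (d s : ℕ → ℝ) (itm : ℕ → ℕ) (P : Finset ℕ) (S : ℕ → Finset ℕ) : Prop :=
  (∀ i, S i ⊆ P) ∧ (Pairwise fun i i' => Disjoint (S i) (S i')) ∧
  (∀ i < m, ∀ q ∈ S i, s (itm q) ≤ d i) ∧ (∀ i, m ≤ i → S i = ∅)

/-- The modified profit `p*` of a solution, where `psz q` is the size of part `q`. -/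
def pStarParts (m : ℕ) (d p psz : ℕ → ℝ) (S : ℕ → Finset ℕ) : ℝ :=
  ∑ i ∈ Finset.range m, p i * min ((∑ q ∈ S i, psz q) / d i) 1

/-- A solution of the modified Bin Covering problem is maximal if there are no two distinct
bins `i`, `i'` with `0 < s(S_i) < d_i`, `0 < s(S_i') < d_i'` and `e_i ≤ e_i'` such that
some item of `S_i` is admissible to bin `i'`. -/
def MaximalMod (m : ℕ) (d p s : ℕ → ℝ) (S : ℕ → Finset ℕ) : Prop :=
  ¬ ∃ i i', i < m ∧ i' < m ∧ i ≠ i' ∧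
      (0 < ∑ j ∈ S i, s j) ∧ (∑ j ∈ S i, s j) < d i ∧
      (0 < ∑ j ∈ S i', s j) ∧ (∑ j ∈ S i', s j) < d i' ∧
      p i / d i ≤ p i' / d i' ∧ ∃ j ∈ S i, s j ≤ d i'

/-- A solution induced by a matching in the bipartite graph on bins and items with an
edge `ij` whenever `s j > d i`: every bin receives at most one item, and any item
assigned to a bin covers it singularly. -/
def IsMatchingSol (m n : ℕ) (d s : ℕ → ℝ) (S : ℕ → Finset ℕ) : Prop :=
  IsSolution (Finset.range n) S ∧ (∀ i, (S i).card ≤ 1) ∧ ∀ i < m, ∀ j ∈ S i, d i < s j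

end BinCov

namespace BinCov

/- STATEMENT 14 -/
lemma takeFill_append (s : ℕ → ℝ) : ∀ (dem : ℝ) (l : List ℕ),
    (takeFill s dem l).1 ++ (takeFill s dem l).2 = l
  | _, [] => rfl
  | dem, j :: rest => by
    rw [takeFill]
    split_ifs with h
    · rfl
    · simpa using takeFill_append s (dem - s j) rest

lemma takeFill_sum (s : ℕ → ℝ) : ∀ (dem : ℝ) (l : List ℕ),
    dem ≤ (l.map s).sum → dem ≤ (((takeFill s dem l).1).map s).sum
  | dem, [], h => by simpa [takeFill] using h
  | dem, j :: rest, h => by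
    rw [takeFill]
    split_ifs with hj
    · simpa using hj
    · have := takeFill_sum s (dem - s j) rest (by simp at h; linarith)
      simp only [List.map_cons, List.sum_cons]
      linarith

lemma takeFill_dropLast (s : ℕ → ℝ) : ∀ (dem : ℝ) (l : List ℕ), 0 < dem →
    (((takeFill s dem l).1.dropLast).map s).sum < dem
  | dem, [], h => by simpa [takeFill] using h
  | dem, j :: rest, h => by
    rw [takeFill]
    split_ifs with hj
    · simpa using h
    · push_neg at hj
      have IH := takeFill_dropLast s (dem - s j) rest (by linarith)
      rcases hq : (takeFill s (dem - s j) rest).1 with _ | ⟨a, l'⟩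
      · simp only [hq, List.dropLast_singleton, List.map_nil, List.sum_nil]
        exact h
      · simp only [hq, List.dropLast_cons₂, List.map_cons, List.sum_cons] at IH ⊢
        linarith

lemma append_eq_range' : ∀ (l₁ l₂ : List ℕ) (t k : ℕ), l₁ ++ l₂ = List.range' t k →
    l₂ = List.range' (t + l₁.length) (k - l₁.length)
  | [], l₂, t, k, h => by simpa using h
  | a :: l₁, l₂, t, k, h => by
    rcases k with _ | k
    · simp at h
    · rw [List.range'_succ] at h
      simp only [List.cons_append, List.cons.injEq] at h
      have := append_eq_range' l₁ l₂ (t + 1) k h.2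
      simpa [Nat.succ_sub_succ, Nat.add_assoc, Nat.add_comm 1 l₁.length] using this

lemma nfdAux_not_mem (d s : ℕ → ℝ) : ∀ (bl items : List ℕ) (b : ℕ), b ∉ bl →
    nfdAux d s bl items b = ∅
  | [], _, _, _ => rfl
  | i :: bl, items, b, hb => by
    have hbi : b ≠ i := fun h => hb (h ▸ List.mem_cons_self (a := i) (l := bl))
    have hbl : b ∉ bl := fun h => hb (List.mem_cons_of_mem i h)
    rw [nfdAux]
    split_ifs with h
    · simp [hbi, nfdAux_not_mem d s bl _ b hbl]
    · simp [hbi, nfdAux_not_mem d s bl items b hbl]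

lemma nfdAux_subset (d s : ℕ → ℝ) : ∀ (bl items : List ℕ) (b : ℕ),
    nfdAux d s bl items b ⊆ items.toFinset
  | [], _, _ => by simp [nfdAux]
  | i :: bl, items, b => by
    rw [nfdAux]
    have h1 : (takeFill s (d i) items).1.toFinset ⊆ items.toFinset := by
      intro x hx
      rw [List.mem_toFinset] at hx ⊢
      exact (takeFill_append s (d i) items) ▸ List.mem_append_left _ hx
    have h2 : (takeFill s (d i) items).2.toFinset ⊆ items.toFinset := by
      intro x hx
      rw [List.mem_toFinset] at hx ⊢
      exact (takeFill_append s (d i) items) ▸ List.mem_append_right _ hx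
    split_ifs with h hb hb
    · exact h1
    · exact (nfdAux_subset d s bl _ b).trans h2
    · simp
    · exact nfdAux_subset d s bl items b

lemma nfdAux_master (d s : ℕ → ℝ) (n : ℕ) : ∀ (bl : List ℕ) (t b : ℕ), b ∈ bl →
    nfdAux d s bl (List.range' t (n - t)) b = ∅ ∨
    ∃ t₂, t ≤ t₂ ∧ d b ≤ ((List.range' t₂ (n - t₂)).map s).sum ∧
      nfdAux d s bl (List.range' t (n - t)) b
        = (takeFill s (d b) (List.range' t₂ (n - t₂))).1.toFinset
  | [], _, _, hb => by simp at hb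
  | i :: bl, t, b, hb => by
    have hsuf : (takeFill s (d i) (List.range' t (n - t))).2
        = List.range' (t + (takeFill s (d i) (List.range' t (n - t))).1.length)
            (n - (t + (takeFill s (d i) (List.range' t (n - t))).1.length)) := by
      have h := append_eq_range' _ _ t (n - t) (takeFill_append s (d i) (List.range' t (n - t)))
      rwa [Nat.sub_sub] at h
    simp only [nfdAux]
    split_ifs with h hbi hbi
    · subst hbi
      exact Or.inr ⟨t, le_refl t, h, rfl⟩
    · have hbbl : b ∈ bl := (List.mem_cons.1 hb).resolve_left hbi
      rw [hsuf]
      rcases nfdAux_master d s n bl _ b hbbl with h' | ⟨t₂, ht₂, h1, h2⟩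
      · exact Or.inl h'
      · exact Or.inr ⟨t₂, le_trans (Nat.le_add_right _ _) ht₂, h1, h2⟩
    · exact Or.inl rfl
    · exact nfdAux_master d s n bl t b ((List.mem_cons.1 hb).resolve_left hbi)

lemma toFinset_range (n : ℕ) : (List.range n).toFinset = Finset.range n := by
  ext a; simp

theorem stmt14 (m n : ℕ) (d s : ℕ → ℝ)
    (hd : ∀ i < m, 0 < d i) (hdm : ∀ i i', i ≤ i' → i' < m → d i' ≤ d i)
    (hs : ∀ j < n, 0 < s j) (hsm : ∀ j j', j ≤ j' → j' < n → s j' ≤ s j)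
    (hone : ((Finset.range m).filter (WellCovered d s m (Finset.range n))).card = 1)
    (istar : ℕ) (hhead : IsHead d s m (Finset.range n) istar)
    (h3 : 3 ≤ (nfdSol d s (Finset.range m) (Finset.range n) 0).card)
    (O : ℕ → Finset ℕ) (hO : IsSolution (Finset.range n) O)
    (hOopt : profit d d s (Finset.range m) O = OPT d d s (Finset.range m) (Finset.range n))
    (hassign : ∃ j ∈ nfdSol d s (Finset.range m) (Finset.range n) 0,
      ∃ i, istar ≤ i ∧ i < m ∧ j ∈ O i) :
    OPT d d s (Finset.range m) (Finset.range n) ≤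
      9 / 4 * NFD d s (Finset.range m) (Finset.range n) := by
  set N := nfdSol d s (Finset.range m) (Finset.range n) with hNdef
  set u := nfdU d s (Finset.range m) (Finset.range n) with hudef
  have hN : N = nfdAux d s (List.range m) (List.range n) := by
    rw [hNdef, nfdSol, Finset.sort_range, Finset.sort_range]
  have hu : ∀ i, u i = ∑ j ∈ N i, s j := fun i => rfl
  -- basic facts
  have hsubs : ∀ b, N b ⊆ Finset.range n := by
    intro b
    rw [hN, ← toFinset_range n]
    exact nfdAux_subset d s (List.range m) (List.range n) b
  have hsnn : ∀ j ∈ Finset.range n, 0 ≤ s j := fun j hj => le_of_lt (hs j (Finset.mem_range.1 hj))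
  have hunn : ∀ i, 0 ≤ u i := fun i =>
    Finset.sum_nonneg fun j hj => hsnn j (hsubs i hj)
  have hum : ∀ i, m ≤ i → u i = 0 := by
    intro i hi
    rw [hu, hN, nfdAux_not_mem d s _ _ i (by simp [List.mem_range]; omega), Finset.sum_empty]
  have hm : 0 < m := by
    by_contra hc
    push_neg at hc
    interval_cases m
    rw [hN] at h3
    simp [List.range_zero, nfdAux] at h3
  -- bin 0
  have hm1 : List.range m = 0 :: List.range' 1 (m - 1) := by
    rw [List.range_eq_range']
    conv_lhs => rw [show m = (m - 1) + 1 by omega]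
    rw [List.range'_succ]
  have hcov0 : d 0 ≤ ((List.range n).map s).sum := by
    by_contra hc
    rw [hN, hm1] at h3
    simp only [nfdAux] at h3
    rw [if_neg hc] at h3
    simp at h3
  set q0 := takeFill s (d 0) (List.range n) with hq0def
  have hbin0 : N 0 = q0.1.toFinset := by
    rw [hN, hm1]
    simp only [nfdAux]
    rw [if_pos hcov0, if_pos trivial]
  set c := q0.1.length with hcdef
  have htake : q0.1 = List.take c (List.range n) := by
    conv_rhs => rw [← takeFill_append s (d 0) (List.range n)]
    rw [← hq0def, List.take_left]
  have hcn : c ≤ n := by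
    have h := congrArg List.length htake
    simp only [List.length_take, List.length_range] at h
    omega
  have hprefix : q0.1 = List.range c := by
    rw [htake, List.take_range, min_eq_left hcn]
  have hc3 : 3 ≤ c := by
    have : (N 0).card = c := by
      rw [hbin0, hprefix, toFinset_range, Finset.card_range]
    omega
  have hq02 : q0.2 = List.range' c (n - c) := by
    have h := append_eq_range' q0.1 q0.2 0 n
      (by rw [takeFill_append, List.range_eq_range'])
    simpa [← hcdef] using h
  have hlistsum : ∀ k, ((List.range k).map s).sum = ∑ j ∈ Finset.range k, s j := by
    intro k
    rw [← toFinset_range, List.sum_toFinset _ (List.nodup_range (n := k))]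
  have hu0 : u 0 = ∑ j ∈ Finset.range c, s j := by
    rw [hu, hbin0, hprefix, toFinset_range]
  have hd0 : 0 < d 0 := hd 0 hm
  have hd0u0 : d 0 ≤ u 0 := by
    have h := takeFill_sum s (d 0) (List.range n) hcov0
    rw [← hq0def, hprefix, hlistsum] at h
    rw [hu0]; exact h
  have hpre : ∑ j ∈ Finset.range (c - 1), s j < d 0 := by
    have h := takeFill_dropLast s (d 0) (List.range n) hd0
    rw [← hq0def, hprefix, show c = (c - 1) + 1 by omega, List.range_succ,
      List.dropLast_concat, hlistsum] at h
    exact h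
  have hu0split : u 0 = ∑ j ∈ Finset.range (c - 1), s j + s (c - 1) := by
    rw [hu0]
    conv_lhs => rw [show c = (c - 1) + 1 by omega]
    rw [Finset.sum_range_succ]
  have h01 : s 0 + s 1 ≤ ∑ j ∈ Finset.range (c - 1), s j := by
    have hsub : ({0, 1} : Finset ℕ) ⊆ Finset.range (c - 1) := by
      intro x hx
      simp only [Finset.mem_insert, Finset.mem_singleton] at hx
      rcases hx with h | h <;> simp [h] <;> omega
    calc s 0 + s 1 = ∑ j ∈ ({0, 1} : Finset ℕ), s j := by
          rw [Finset.sum_pair (by norm_num)]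
      _ ≤ _ := Finset.sum_le_sum_of_subset_of_nonneg hsub
          (fun j hj _ => hsnn j (Finset.mem_range.2 (by
            have := Finset.mem_range.1 hj; omega)))
  have hs10 : s 1 ≤ s 0 := hsm 0 1 (by omega) (by omega)
  have hs1c : s (c - 1) ≤ s 1 := hsm 1 (c - 1) (by omega) (by omega)
  -- well-covered analysis
  obtain ⟨w, hF⟩ := Finset.card_eq_one.1 hone
  have hwF : w ∈ (Finset.range m).filter (WellCovered d s m (Finset.range n)) := by
    rw [hF]; exact Finset.mem_singleton_self w
  have hw : WellCovered d s m (Finset.range n) w := (Finset.mem_filter.1 hwF).2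
  obtain ⟨hwm, hwu, e, hwe, hem, he0, hbet, hbnd⟩ := hw
  obtain ⟨i0, i1, hi0m, hi0u, hi0nw, hprev, hi01, hi1z, hcond7, histar1, hustar, hmax⟩ := hhead
  have histar_e : e < istar := by
    by_contra hc
    push_neg at hc
    have := hbnd istar hc
    rw [← hudef] at this hustar
    linarith
  have hi1m : i1 < m := by
    rcases Nat.eq_or_lt_of_le hi01 with h | h
    · omega
    · have h7 := hcond7 (i1 - 1) (by omega) (by omega)
      rw [show i1 - 1 + 1 = i1 by omega, ← hudef] at h7
      by_contra hc
      exact h7 (hum i1 (by omega))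
  have histarm : istar < m := lt_of_le_of_lt histar1 hi1m
  rw [← hudef] at hustar
  have hdstar : 0 < d istar := hd istar histarm
  have hwc0 : WellCovered d s m (Finset.range n) 0 := by
    have hex : ∃ i, 0 < i ∧ nfdU d s (Finset.range m) (Finset.range n) i = 0 :=
      ⟨e, by omega, he0⟩
    refine ⟨hm, by rw [← hudef]; linarith, Nat.find hex, (Nat.find_spec hex).1,
      lt_of_le_of_lt (Nat.find_min' hex ⟨by omega, he0⟩) hem, (Nat.find_spec hex).2,
      fun i h1 h2 h0 => Nat.find_min hex h2 ⟨h1, h0⟩,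
      fun i hi => hbnd i (le_trans hi (Nat.find_min' hex ⟨by omega, he0⟩))⟩
  have hw0 : w = 0 := by
    have h0F : (0 : ℕ) ∈ (Finset.range m).filter (WellCovered d s m (Finset.range n)) :=
      Finset.mem_filter.2 ⟨Finset.mem_range.2 hm, hwc0⟩
    rw [hF, Finset.mem_singleton] at h0F
    exact h0F.symm
  have he1 : 1 ≤ e := by omega
  have histar2 : 2 ≤ istar := by omega
  have hu1 : u 1 = 0 := by
    by_contra h1ne
    have hne : e ≠ 1 := by
      intro h
      rw [h, ← hudef] at he0
      exact h1ne he0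
    have hex2 : ∃ i, 1 < i ∧ nfdU d s (Finset.range m) (Finset.range n) i = 0 :=
      ⟨e, by omega, he0⟩
    have hwc1 : WellCovered d s m (Finset.range n) 1 := by
      refine ⟨by omega, by rw [← hudef]; exact lt_of_le_of_ne (hunn 1) (Ne.symm h1ne),
        Nat.find hex2, (Nat.find_spec hex2).1,
        lt_of_le_of_lt (Nat.find_min' hex2 ⟨by omega, he0⟩) hem, (Nat.find_spec hex2).2,
        fun i h1 h2 h0 => Nat.find_min hex2 h2 ⟨h1, h0⟩,
        fun i hi => hbnd i (le_trans hi (Nat.find_min' hex2 ⟨by omega, he0⟩))⟩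
    have h1F : (1 : ℕ) ∈ (Finset.range m).filter (WellCovered d s m (Finset.range n)) :=
      Finset.mem_filter.2 ⟨Finset.mem_range.2 (by omega), hwc1⟩
    rw [hF, Finset.mem_singleton, hw0] at h1F
    exact absurd h1F (by norm_num)
  -- bin 1 was skipped: remaining total < d 1
  have hrange'1 : List.range' 1 (m - 1) = 1 :: List.range' 2 (m - 2) := by
    conv_lhs => rw [show m - 1 = (m - 2) + 1 by omega]
    rw [List.range'_succ]
  set Rrest := ((List.range' c (n - c)).map s).sum with hRdef
  have hR : Rrest < d 1 := by
    by_contra hc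
    push_neg at hc
    have hN1' : N 1 = (takeFill s (d 1) (List.range' c (n - c))).1.toFinset := by
      rw [hN, hm1]
      simp only [nfdAux]
      rw [if_pos hcov0, if_neg (show ¬(1 : ℕ) = 0 by norm_num), ← hq0def, hq02, hrange'1]
      simp only [nfdAux]
      rw [if_pos hc, if_pos trivial]
    have hd1 : 0 < d 1 := hd 1 (by omega)
    have hne : N 1 ≠ ∅ := by
      rw [hN1']
      intro hemp
      rw [List.toFinset_eq_empty_iff] at hemp
      have := takeFill_sum s (d 1) (List.range' c (n - c)) hc
      rw [hemp] at this
      simp at this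
      linarith
    have hpos : 0 < u 1 := by
      rw [hu]
      refine Finset.sum_pos (fun j hj => hs j (Finset.mem_range.1 (hsubs 1 hj)))
        (Finset.nonempty_of_ne_empty hne)
    rw [hu1] at hpos
    exact lt_irrefl 0 hpos
  -- bin istar: a single huge item
  have hNistar : N istar
      = nfdAux d s (List.range' 1 (m - 1)) (List.range' c (n - c)) istar := by
    rw [hN, hm1]
    simp only [nfdAux]
    rw [if_pos hcov0, if_neg (by omega), ← hq0def, hq02]
  obtain ⟨t₂, hct₂, hcovt, heqt⟩ : ∃ t₂, c ≤ t₂ ∧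
      d istar ≤ ((List.range' t₂ (n - t₂)).map s).sum ∧
      N istar = (takeFill s (d istar) (List.range' t₂ (n - t₂))).1.toFinset := by
    rcases nfdAux_master d s n (List.range' 1 (m - 1)) c istar
        (List.mem_range'_1.2 ⟨by omega, by omega⟩) with h | ⟨t₂, h1, h2, h3'⟩
    · exfalso
      rw [← hNistar] at h
      have : u istar = 0 := by rw [hu, h, Finset.sum_empty]
      linarith
    · exact ⟨t₂, h1, h2, by rw [hNistar, h3']⟩
  have ht₂n : t₂ < n := by
    by_contra hc
    push_neg at hc
    rw [show n - t₂ = 0 by omega] at hcovt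
    simp at hcovt
    linarith
  have hlist : List.range' t₂ (n - t₂) = t₂ :: List.range' (t₂ + 1) (n - t₂ - 1) := by
    conv_lhs => rw [show n - t₂ = (n - t₂ - 1) + 1 by omega]
    rw [List.range'_succ]
  have hkey : 2 * d istar < s t₂ := by
    by_cases hsing : d istar ≤ s t₂
    · have : N istar = {t₂} := by
        rw [heqt, hlist, takeFill, if_pos hsing]
        rfl
      have huistar : u istar = s t₂ := by
        rw [hu, this, Finset.sum_singleton]
      linarith
    · exfalso
      push_neg at hsing
      set l := (takeFill s (d istar) (List.range' t₂ (n - t₂))).1 with hldef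
      have hsum : d istar ≤ (l.map s).sum := takeFill_sum s _ _ hcovt
      have hlast : ((l.dropLast).map s).sum < d istar := takeFill_dropLast s _ _ hdstar
      have hlne : l ≠ [] := by
        intro h
        rw [h] at hsum
        simp at hsum
        linarith
      have hgmem : l.getLast hlne ∈ l := List.getLast_mem hlne
      have hlsub : ∀ x ∈ l, x ∈ List.range' t₂ (n - t₂) := by
        intro x hx
        rw [← takeFill_append s (d istar) (List.range' t₂ (n - t₂))]
        exact List.mem_append_left _ hx
      have hgrange := List.mem_range'_1.1 (hlsub _ hgmem)
      have hgs : s (l.getLast hlne) ≤ s t₂ := hsm t₂ _ hgrange.1 (by omega)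
      have hsumsplit : (l.map s).sum = ((l.dropLast).map s).sum + s (l.getLast hlne) := by
        conv_lhs => rw [← List.dropLast_append_getLast hlne]
        rw [List.map_append, List.sum_append]
        simp
      have hnodup : l.Nodup := by
        have : l.Sublist (List.range' t₂ (n - t₂)) := by
          rw [← takeFill_append s (d istar) (List.range' t₂ (n - t₂))]
          exact List.sublist_append_left _ _
        exact this.nodup (List.nodup_range' (s := t₂) (n := n - t₂))
      have huistar : u istar = (l.map s).sum := by
        rw [hu, heqt, List.sum_toFinset _ hnodup]
      rw [huistar, hsumsplit] at hustar
      linarith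
  -- the assigned item
  obtain ⟨j₀, hj₀bin, i₀, hi₀star, hi₀m, hj₀O⟩ := hassign
  have hj₀c : j₀ < c := by
    rw [hbin0, hprefix, toFinset_range, Finset.mem_range] at hj₀bin
    exact hj₀bin
  have hsj₀t₂ : s t₂ ≤ s j₀ := hsm j₀ t₂ (by omega) ht₂n
  have h2d : 2 * d i₀ < s j₀ := by
    have := hdm istar i₀ hi₀star hi₀m
    linarith
  have hsj₀nn : 0 ≤ s j₀ := le_of_lt (hs j₀ (by omega))
  -- bound on profit of O
  have hOsub := hO.1
  have hOdisj := hO.2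
  set Stot := ∑ j ∈ Finset.range n, s j with hStot
  have key1 : profit d d s (Finset.range m) O ≤ Stot - s j₀ / 2 := by
    have hterm : ∀ i ∈ Finset.range m,
        (if d i ≤ ∑ j ∈ O i, s j then d i else 0)
          ≤ (∑ j ∈ O i, s j) - (if i = i₀ then s j₀ / 2 else 0) := by
      intro i _
      have hOnn : 0 ≤ ∑ j ∈ O i, s j :=
        Finset.sum_nonneg fun j hj => hsnn j (hOsub i hj)
      by_cases hii : i = i₀
      · subst hii
        have hsge : s j₀ ≤ ∑ j ∈ O i, s j :=
          Finset.single_le_sum (fun j hj => hsnn j (hOsub i hj)) hj₀O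
        rw [if_pos rfl]
        split_ifs with hcov
        · linarith
        · linarith
      · rw [if_neg hii]
        split_ifs with hcov
        · linarith
        · linarith
    have h1 : profit d d s (Finset.range m) O
        ≤ ∑ i ∈ Finset.range m, ((∑ j ∈ O i, s j) - (if i = i₀ then s j₀ / 2 else 0)) :=
      Finset.sum_le_sum hterm
    have h2 : ∑ i ∈ Finset.range m, (if i = i₀ then s j₀ / 2 else 0) = s j₀ / 2 := by
      rw [Finset.sum_ite_eq' (Finset.range m) i₀ (fun _ => s j₀ / 2),
        if_pos (Finset.mem_range.2 hi₀m)]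
    have h3' : ∑ i ∈ Finset.range m, ∑ j ∈ O i, s j ≤ Stot := by
      have hdisj : Set.PairwiseDisjoint ↑(Finset.range m) O :=
        fun a _ b _ hab => hOdisj hab
      rw [← Finset.sum_biUnion hdisj]
      refine Finset.sum_le_sum_of_subset_of_nonneg ?_ fun j hj _ => hsnn j hj
      intro x hx
      obtain ⟨i, _, hxi⟩ := Finset.mem_biUnion.1 hx
      exact hOsub i hxi
    rw [Finset.sum_sub_distrib, h2] at h1
    linarith
  -- NFD ≥ d 0
  have hNFD : d 0 ≤ NFD d s (Finset.range m) (Finset.range n) := by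
    rw [NFD, profit]
    have h0 : (if d 0 ≤ ∑ j ∈ N 0, s j then d 0 else 0) = d 0 := by
      rw [if_pos]
      rw [← hu 0]
      exact hd0u0
    calc d 0 = (if d 0 ≤ ∑ j ∈ N 0, s j then d 0 else 0) := h0.symm
      _ ≤ _ := by
        refine Finset.single_le_sum (f := fun i => if d i ≤ ∑ j ∈ nfdSol d s (Finset.range m) (Finset.range n) i, s j then d i else 0) ?_ (Finset.mem_range.2 hm)
        intro i hi
        split_ifs
        · exact le_of_lt (hd i (Finset.mem_range.1 hi))
        · exact le_refl 0
  -- total size split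
  have hsplit : Stot = u 0 + Rrest := by
    have h := congrArg (fun l => (List.map s l).sum) (takeFill_append s (d 0) (List.range n))
    simp only [List.map_append, List.sum_append] at h
    rw [← hq0def, hprefix, hq02, hlistsum, hlistsum] at h
    rw [hStot, ← h, hu0, ← hRdef]
  have hd1d0 : d 1 ≤ d 0 := hdm 0 1 (by omega) (by omega)
  have hsjc : s (c - 1) ≤ s j₀ := hsm j₀ (c - 1) (by omega) (by omega)
  -- conclude
  rw [← hOopt]
  have h2s1 : 2 * s 1 < d 0 := by linarith
  have hsnn1 : 0 ≤ s 1 := le_of_lt (hs 1 (by omega))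
  have hsnnc : 0 ≤ s (c - 1) := le_of_lt (hs (c - 1) (by omega))
  linarith

end BinCov
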